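/- Let λ ∈ V be a dominant weight, w ∈ W, and fix an index 1 ≤ i ≤ r. Suppose μ' ∈ P_λ^w is maximal in the α_i-direction, i.e., for every k ∈ ℚ, μ' + k α_i ∈ P_λ^w implies k ≤ 0. Then μ' can be written as a convex combination μ' = Σ_u b_u · uλ, where the sum runs over u ∈ W with u ≤ w and u⁻¹ α_i ∈ Φ⁺, each b_u ∈ ℚ is ≥ 0, and Σ_u b_u = 1. -/

import Mathlib

open scoped Classical

/-- Data of a root system with a fixed choice of simple roots: an ambient
`ℚ`-vector space `V`, a set of roots `Φ` with a distinguished subset `pos` of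
positive roots, a coroot functional `coroot β = ⟨·, β^∨⟩` for each root, and
simple roots `α 1, …, α r`. -/
structure RootData where
  r : ℕ
  V : Type
  [grp : AddCommGroup V]
  [mod : Module ℚ V]
  Φ : Set V
  pos : Set V
  coroot : V → Module.Dual ℚ V
  α : Fin r → V

attribute [instance] RootData.grp RootData.mod

namespace RootData

variable (R : RootData)

/-- The group of linear automorphisms of `V`, in which the Weyl group lives. -/
abbrev Aut : Type := R.V ≃ₗ[ℚ] R.V

/-- The linear map `v ↦ v - ⟨v, β^∨⟩ β`. -/
noncomputable def reflMap (β : R.V) : R.V →ₗ[ℚ] R.V :=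
  LinearMap.id - (R.coroot β).smulRight β

/-- The reflection `s_β` associated to a root `β`, as a linear automorphism. -/
noncomputable def s (β : R.V) : R.Aut :=
  if h : (R.reflMap β).comp (R.reflMap β) = LinearMap.id then
    LinearEquiv.ofLinear (R.reflMap β) (R.reflMap β) h h
  else LinearEquiv.refl ℚ R.V

/-- The simple reflections `s_i := s_{α_i}`. -/
noncomputable def S (i : Fin R.r) : R.Aut := R.s (R.α i)

/-- The Weyl group `W`, generated by the simple reflections. -/
noncomputable def weylGroup : Subgroup R.Aut := Subgroup.closure (Set.range R.S)

/-- The product `s_{i_1} ⋯ s_{i_k}` of a word in the simple reflections. -/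
noncomputable def wordProd (l : List (Fin R.r)) : R.Aut := (l.map R.S).prod

/-- The length function on `W`: least length of a word in the simple
reflections expressing the given element. -/
noncomputable def len (w : R.Aut) : ℕ :=
  sInf {n | ∃ l : List (Fin R.r), l.length = n ∧ R.wordProd l = w}

/-- A word is reduced if its length equals the length of its product. -/
def Reduced (l : List (Fin R.r)) : Prop := R.len (R.wordProd l) = l.length

/-- The Bruhat order on `W`: `u ≤ w` iff some reduced word for `w` has a
subword whose product is `u`. -/
def BruhatLE (u w : R.Aut) : Prop :=
  ∃ l : List (Fin R.r), R.Reduced l ∧ R.wordProd l = w ∧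
    ∃ l' : List (Fin R.r), l'.Sublist l ∧ R.wordProd l' = u

/-- Strict Bruhat order. -/
def BruhatLT (u w : R.Aut) : Prop := R.BruhatLE u w ∧ u ≠ w

/-- One step of the Demazure product: `s_i * w := max {w, s_i w}`. -/
noncomputable def dmulStep (i : Fin R.r) (x : R.Aut) : R.Aut :=
  if R.len x < R.len (R.S i * x) then R.S i * x else x

/-- Demazure product of a word in the simple reflections against `w`:
`s_{i_1} * (s_{i_2} * (⋯ * (s_{i_k} * w)))`. -/
noncomputable def dmulList (l : List (Fin R.r)) (w : R.Aut) : R.Aut :=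
  l.foldr R.dmulStep w

/-- The Demazure product `v * w` on the Weyl group, computed by choosing a
reduced word for `v` (it is independent of this choice). -/
noncomputable def dmul (v w : R.Aut) : R.Aut :=
  if h : ∃ l : List (Fin R.r), R.Reduced l ∧ R.wordProd l = v then
    R.dmulList h.choose w
  else v * w

/-- The parabolic subgroup `W_{P_i}` generated by the simple reflections
`s_j`, `j ≠ i`. -/
noncomputable def WPar (i : Fin R.r) : Subgroup R.Aut :=
  Subgroup.closure (R.S '' {j | j ≠ i})

/-- `W^{P_i}`: the set of minimal-length representatives of cosets of
`W/W_{P_i}`. -/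
def minReps (i : Fin R.r) : Set R.Aut :=
  {v | v ∈ R.weylGroup ∧ ∀ p ∈ R.WPar i, R.len v ≤ R.len (v * p)}

/-- `u` is the minimal-length representative of the coset `w W_{P_i}`. -/
def IsMinRep (i : Fin R.r) (u w : R.Aut) : Prop :=
  u ∈ R.minReps i ∧ u⁻¹ * w ∈ R.WPar i

/-- A weight is dominant if it pairs nonnegatively with every simple coroot. -/
def Dominant (lam : R.V) : Prop := ∀ i : Fin R.r, 0 ≤ R.coroot (R.α i) lam

/-- The dual action of the Weyl group on `V* `: `(u f)(v) = f(u⁻¹ v)`. -/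
noncomputable def dualAct (u : R.Aut) (f : Module.Dual ℚ R.V) : Module.Dual ℚ R.V :=
  f.comp (u.symm : R.V →ₗ[ℚ] R.V)

/-- The Demazure polytope `P_λ^w := conv {uλ : u ∈ W, u ≤ w}`. -/
noncomputable def demPolytope (lam : R.V) (w : R.Aut) : Set R.V :=
  convexHull ℚ {m | ∃ u : R.Aut, u ∈ R.weylGroup ∧ R.BruhatLE u w ∧ m = u lam}

/-- Membership in the weight lattice `X`. -/
def IsWeight (lam : R.V) : Prop := ∀ β ∈ R.Φ, ∃ m : ℤ, R.coroot β lam = (m : ℚ)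

/-- The root lattice `Q = ℤΦ`. -/
noncomputable def rootLattice : AddSubgroup R.V := AddSubgroup.closure R.Φ

/-- `w₀` is the longest element of the Weyl group. -/
def IsLongest (w₀ : R.Aut) : Prop :=
  w₀ ∈ R.weylGroup ∧ ∀ g ∈ R.weylGroup, R.len g ≤ R.len w₀

/-- The positive roots `Φ_{P_i}⁺ = Φ⁺ ∩ span {α_j : j ≠ i}` of the standard
Levi subsystem. -/
def parPos (i : Fin R.r) : Set R.V :=
  {η | η ∈ R.pos ∧ η ∈ Submodule.span ℚ (R.α '' {j | j ≠ i})}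

/-- The value `D_i (e^λ)` of the Demazure operator on a basis element of the
group ring `ℤ[X]`. -/
noncomputable def demOnBasis (i : Fin R.r) (lam : R.V) : R.V →₀ ℤ :=
  if 0 ≤ ⌊R.coroot (R.α i) lam⌋ then
    ∑ k ∈ Finset.range (⌊R.coroot (R.α i) lam⌋.toNat + 1),
      Finsupp.single (lam - (k : ℚ) • R.α i) 1
  else if ⌊R.coroot (R.α i) lam⌋ = -1 then 0
  else - ∑ k ∈ Finset.range ((-⌊R.coroot (R.α i) lam⌋).toNat - 1),
      Finsupp.single (lam + ((k : ℚ) + 1) • R.α i) 1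

/-- The Demazure operator `D_i`, as a `ℤ`-linear endomorphism of the group
ring `ℤ[X]` (realized as finitely supported functions `V →₀ ℤ`). -/
noncomputable def demOp (i : Fin R.r) : (R.V →₀ ℤ) →ₗ[ℤ] (R.V →₀ ℤ) :=
  Finsupp.lsum ℤ fun lam => LinearMap.toSpanSingleton ℤ (R.V →₀ ℤ) (R.demOnBasis i lam)

/-- The Demazure character `D_{i_1} ⋯ D_{i_k} (e^λ)`. -/
noncomputable def demChar (l : List (Fin R.r)) (lam : R.V) : R.V →₀ ℤ :=
  l.foldr (fun i p => R.demOp i p) (Finsupp.single lam 1)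

/-- The axioms of a finite crystallographic root system spanning `V`, with
simple roots `α_i` and positive roots `pos`. -/
structure IsRootSystem (R : RootData) : Prop where
  finite : R.Φ.Finite
  span_top : Submodule.span ℚ R.Φ = ⊤
  ne_zero : ∀ β ∈ R.Φ, β ≠ 0
  coroot_self : ∀ β ∈ R.Φ, R.coroot β β = 2
  crystallographic : ∀ β ∈ R.Φ, ∀ γ ∈ R.Φ, ∃ m : ℤ, R.coroot β γ = (m : ℚ)
  reflection_stable : ∀ β ∈ R.Φ, ∀ γ ∈ R.Φ, γ - R.coroot β γ • β ∈ R.Φ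
  simple_mem : ∀ i, R.α i ∈ R.Φ
  indep : LinearIndependent ℚ R.α
  pos_subset : R.pos ⊆ R.Φ
  pos_or_neg : ∀ β ∈ R.Φ, (β ∈ R.pos ∧ -β ∉ R.pos) ∨ (β ∉ R.pos ∧ -β ∈ R.pos)
  simple_pos : ∀ i, R.α i ∈ R.pos
  pos_nonneg_comb : ∀ β ∈ R.pos, ∃ c : Fin R.r → ℚ, (∀ i, 0 ≤ c i) ∧ β = ∑ i, c i • R.α i

end RootData

/-!
A vertex `uλ` with `u⁻¹ α_i < 0` is pushed in the `α_i`-direction onto the vertex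
`s_i u λ = uλ + ⟨λ, (-u⁻¹ α_i)ᵛ⟩ α_i`, where `(s_i u)⁻¹ α_i > 0`, the coefficient is nonnegative
because `λ` is dominant, and `s_i u ≤ w` by the exchange property. Hence `P_λ^w` lies in
`conv {uλ : u ≤ w, u⁻¹ α_i > 0} - ℚ≥0 α_i`, and a point that is maximal in the `α_i`-direction
cannot use the ray.

The root-theoretic inputs (naturality of coroots, `⟨λ, βᵛ⟩ ≥ 0` for `β > 0`) come from the
formula `⟨v, βᵛ⟩ = 2 B(v, β) / B(β, β)` for a positive definite form `B` invariant under the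
finite group of automorphisms of `V` preserving `Φ` (obtained by averaging).
-/

open Set Module Pointwise

theorem apply_mem_of_mem_stabilizer {K V : Type*} [Semiring K] [AddCommMonoid V] [Module K V]
    {Φ : Set V} {g : V ≃ₗ[K] V} (hg : g ∈ MulAction.stabilizer (V ≃ₗ[K] V) Φ) {x : V}
    (hx : x ∈ Φ) : g x ∈ Φ := by
  rw [← MulAction.mem_stabilizer_iff.mp hg]
  exact Set.smul_mem_smul_set hx

theorem finite_stabilizer_of_finite_of_span_eq_top {K V : Type*} [Semiring K] [AddCommMonoid V]
    [Module K V] {Φ : Set V} (hΦ : Φ.Finite) (hspan : Submodule.span K Φ = ⊤) :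
    Finite (MulAction.stabilizer (V ≃ₗ[K] V) Φ) := by
  have : Finite Φ := hΦ.to_subtype
  refine Set.finite_coe_iff.mpr <| Set.Finite.of_finite_image (f := fun g (x : Φ) => g x)
    ((Set.Finite.pi (t := fun _ : Φ => Φ) fun _ => hΦ).subset ?_) ?_
  · rintro _ ⟨g, hg, rfl⟩ x -
    exact apply_mem_of_mem_stabilizer hg x.2
  · intro g _ g' _ h
    exact LinearEquiv.toLinearMap_injective <|
      LinearMap.ext_on hspan fun x hx => congrFun h ⟨x, hx⟩

section InvariantForm

variable {K V : Type*} [Field K] [LinearOrder K] [IsStrictOrderedRing K] [AddCommGroup V]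
  [Module K V]

theorem exists_bilinForm_pos [FiniteDimensional K V] :
    ∃ B : LinearMap.BilinForm K V, ∀ x ≠ 0, 0 < B x x := by
  let b := Module.finBasis K V
  refine ⟨Matrix.toBilin b 1, fun x hx => ?_⟩
  obtain ⟨j, hj⟩ := Finsupp.ne_iff.mp (show b.repr x ≠ 0 by simpa using hx)
  simp only [Matrix.toBilin_apply, Matrix.one_apply, mul_ite, mul_one, mul_zero, ite_mul,
    zero_mul, Finset.sum_ite_eq, Finset.mem_univ, if_true]
  exact Finset.sum_pos' (fun i _ => mul_self_nonneg _) ⟨j, Finset.mem_univ j, mul_self_pos.mpr hj⟩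

theorem exists_bilinForm_pos_invariant [FiniteDimensional K V] (G : Subgroup (V ≃ₗ[K] V))
    [Finite G] : ∃ B : LinearMap.BilinForm K V,
      (∀ x ≠ 0, 0 < B x x) ∧ ∀ g ∈ G, ∀ x y, B (g x) (g y) = B x y := by
  have := Fintype.ofFinite G
  obtain ⟨B₀, hB₀⟩ := exists_bilinForm_pos (K := K) (V := V)
  let B := ∑ g : G, B₀.compl₁₂ (g : V →ₗ[K] V) (g : V →ₗ[K] V)
  have hB (x y : V) : B x y = ∑ g : G, B₀ ((g : V ≃ₗ[K] V) x) ((g : V ≃ₗ[K] V) y) := by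
    simp [B, LinearMap.sum_apply]
  refine ⟨B, fun x hx => ?_, fun g hg x y => ?_⟩
  · rw [hB]
    exact Finset.sum_pos (fun g _ => hB₀ _ ((LinearEquiv.map_ne_zero_iff _).mpr hx))
      Finset.univ_nonempty
  · rw [hB, hB]
    exact Fintype.sum_equiv (Equiv.mulRight ⟨g, hg⟩) _ _ fun _ => rfl

end InvariantForm

theorem apply_eq_of_reflection_invariant {K V : Type*} [Field K] [AddCommGroup V] [Module K V]
    {B : LinearMap.BilinForm K V} {f : Dual K V} {x : V} (hf : f x = 2)
    (hB : ∀ y z, B (reflection hf y) (reflection hf z) = B y z) (hx : B x x ≠ 0) (v : V) :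
    f v = 2 * B v x / B x x := by
  have h := hB v x
  simp only [reflection_apply_self, reflection_apply, map_neg, map_sub, map_smul,
    LinearMap.sub_apply, LinearMap.smul_apply, smul_eq_mul] at h
  field_simp
  linear_combination h

section Convex

variable {𝕜 E ι : Type*} [Field 𝕜] [LinearOrder 𝕜] [IsStrictOrderedRing 𝕜] [AddCommGroup E]
  [Module 𝕜 E]

theorem mem_convexHull_of_maximal_in_direction {S S' : Set E} {α x : E} (hS' : S' ⊆ S)
    (hS : ∀ y ∈ S, ∃ k : 𝕜, 0 ≤ k ∧ y + k • α ∈ S') (hx : x ∈ convexHull 𝕜 S)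
    (hmax : ∀ k : 𝕜, x + k • α ∈ convexHull 𝕜 S → k ≤ 0) : x ∈ convexHull 𝕜 S' := by
  have hsub : convexHull 𝕜 S ⊆ convexHull 𝕜 S' + LinearMap.toSpanSingleton 𝕜 E α '' Iic 0 := by
    refine convexHull_min (fun y hy => ?_)
      ((convex_convexHull 𝕜 S').add ((convex_Iic 0).linear_image _))
    obtain ⟨k, hk, hyk⟩ := hS y hy
    exact ⟨_, subset_convexHull 𝕜 S' hyk, -k • α, ⟨-k, by simpa using hk, rfl⟩, by module⟩
  obtain ⟨p, hp, _, ⟨k, hk, rfl⟩, rfl⟩ := hsub hx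
  have hk' : -k ≤ 0 := hmax (-k) <| by
    convert convexHull_mono hS' hp using 1
    simp only [LinearMap.toSpanSingleton_apply]
    module
  obtain rfl : k = 0 := le_antisymm hk (by linarith)
  simpa using hp

theorem exists_finset_of_mem_convexHull_image {f : ι → E} {A : Set ι} {x : E}
    (hx : x ∈ convexHull 𝕜 (f '' A)) : ∃ (T : Finset ι) (b : ι → 𝕜),
      (∀ u ∈ T, u ∈ A ∧ 0 ≤ b u) ∧ ∑ u ∈ T, b u = 1 ∧ x = ∑ u ∈ T, b u • f u := by
  rw [convexHull_eq_union_convexHull_finite_subsets] at hx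
  obtain ⟨t, ht, hx⟩ := mem_iUnion₂.mp hx
  obtain ⟨T, hTA, hinj, rfl⟩ := Finset.exists_subset_injOn_image_eq_of_surjOn A t ht
  obtain ⟨w, hw0, hw1, rfl⟩ := Finset.mem_convexHull'.mp hx
  refine ⟨T, w ∘ f, fun u hu => ⟨hTA hu, hw0 _ (Finset.mem_image_of_mem f hu)⟩, ?_, ?_⟩
  · rwa [Finset.sum_image hinj] at hw1
  · rw [Finset.sum_image hinj]
    rfl

end Convex

namespace RootData

variable {R : RootData}

theorem wordProd_cons (j : Fin R.r) (l : List (Fin R.r)) :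
    R.wordProd (j :: l) = R.S j * R.wordProd l := by
  simp [wordProd]

theorem s_eq_reflection {β : R.V} (h : R.coroot β β = 2) : R.s β = reflection h := by
  have hinv : (R.reflMap β).comp (R.reflMap β) = LinearMap.id :=
    LinearMap.ext (involutive_preReflection h)
  ext v
  simp only [s, dif_pos hinv]
  rfl

namespace IsRootSystem

variable (hR : R.IsRootSystem)
include hR

theorem S_eq_reflection (j : Fin R.r) :
    R.S j = reflection (hR.coroot_self _ (hR.simple_mem j)) :=
  s_eq_reflection _

theorem S_apply (j : Fin R.r) (v : R.V) : R.S j v = v - R.coroot (R.α j) v • R.α j := by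
  rw [hR.S_eq_reflection, reflection_apply]

theorem S_apply_self (j : Fin R.r) : R.S j (R.α j) = -R.α j := by
  rw [hR.S_eq_reflection, reflection_apply_self]

theorem S_inv (j : Fin R.r) : (R.S j)⁻¹ = R.S j := by
  rw [hR.S_eq_reflection, reflection_inv]

theorem S_mul_self (j : Fin R.r) : R.S j * R.S j = 1 :=
  mul_eq_one_iff_eq_inv.mpr (hR.S_inv j).symm

theorem neg_mem_pos_of_notMem_pos {β : R.V} (hβ : β ∈ R.Φ) (h : β ∉ R.pos) : -β ∈ R.pos :=
  ((hR.pos_or_neg β hβ).resolve_left fun h' => h h'.1).2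

theorem s_mem_stabilizer {β : R.V} (hβ : β ∈ R.Φ) : R.s β ∈ MulAction.stabilizer R.Aut R.Φ := by
  have h2 := hR.coroot_self β hβ
  have hmaps : MapsTo (reflection h2) R.Φ R.Φ := fun γ hγ => by
    rw [reflection_apply]
    exact hR.reflection_stable β hβ γ hγ
  rw [MulAction.mem_stabilizer_iff, ← Set.image_smul, s_eq_reflection h2]
  exact (bijOn_reflection_of_mapsTo h2 hmaps).image_eq

theorem weylGroup_le_stabilizer : R.weylGroup ≤ MulAction.stabilizer R.Aut R.Φ :=
  (Subgroup.closure_le _).mpr <| by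
    rintro _ ⟨j, rfl⟩
    exact hR.s_mem_stabilizer (hR.simple_mem j)

theorem exists_invariant_form : ∃ B : LinearMap.BilinForm ℚ R.V, (∀ x ≠ 0, 0 < B x x) ∧
    ∀ g ∈ MulAction.stabilizer R.Aut R.Φ, ∀ x y, B (g x) (g y) = B x y := by
  have : FiniteDimensional ℚ R.V := ⟨⟨hR.finite.toFinset, by simpa using hR.span_top⟩⟩
  have := finite_stabilizer_of_finite_of_span_eq_top hR.finite hR.span_top
  exact exists_bilinForm_pos_invariant _

theorem coroot_eq_of_invariant {B : LinearMap.BilinForm ℚ R.V} (hpos : ∀ x ≠ 0, 0 < B x x)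
    (hinv : ∀ g ∈ MulAction.stabilizer R.Aut R.Φ, ∀ x y, B (g x) (g y) = B x y)
    {β : R.V} (hβ : β ∈ R.Φ) (v : R.V) : R.coroot β v = 2 * B v β / B β β := by
  have h2 := hR.coroot_self β hβ
  refine apply_eq_of_reflection_invariant h2 (fun y z => ?_) (hpos β (hR.ne_zero β hβ)).ne' v
  rw [← s_eq_reflection h2]
  exact hinv _ (hR.s_mem_stabilizer hβ) y z

theorem coroot_apply_apply {g : R.Aut} (hg : g ∈ MulAction.stabilizer R.Aut R.Φ) {β : R.V}
    (hβ : β ∈ R.Φ) (v : R.V) : R.coroot (g β) (g v) = R.coroot β v := by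
  obtain ⟨B, hpos, hinv⟩ := hR.exists_invariant_form
  rw [hR.coroot_eq_of_invariant hpos hinv (apply_mem_of_mem_stabilizer hg hβ),
    hR.coroot_eq_of_invariant hpos hinv hβ, hinv g hg, hinv g hg]

theorem coroot_neg {β : R.V} (hβ : β ∈ R.Φ) (v : R.V) : R.coroot (-β) v = -R.coroot β v := by
  obtain ⟨B, hpos, hinv⟩ := hR.exists_invariant_form
  have hβ' : -β ∈ R.Φ := by
    simpa [hR.coroot_self β hβ, two_smul] using hR.reflection_stable β hβ β hβ
  rw [hR.coroot_eq_of_invariant hpos hinv hβ', hR.coroot_eq_of_invariant hpos hinv hβ]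
  simp only [map_neg, LinearMap.neg_apply, neg_neg]
  ring

theorem s_smul {β : R.V} {c : ℚ} (hβ : β ∈ R.Φ) (hcβ : c • β ∈ R.Φ) (hc : c ≠ 0) :
    R.s (c • β) = R.s β := by
  obtain ⟨B, hpos, hinv⟩ := hR.exists_invariant_form
  have hBβ := (hpos β (hR.ne_zero β hβ)).ne'
  ext v
  rw [s_eq_reflection (hR.coroot_self _ hcβ), s_eq_reflection (hR.coroot_self β hβ),
    reflection_apply, reflection_apply, hR.coroot_eq_of_invariant hpos hinv hcβ,
    hR.coroot_eq_of_invariant hpos hinv hβ]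
  simp only [map_smul, LinearMap.smul_apply, smul_eq_mul, smul_smul]
  congr 2
  field_simp

theorem s_apply_eq_mul_mul_inv {g : R.Aut} (hg : g ∈ MulAction.stabilizer R.Aut R.Φ) {β : R.V}
    (hβ : β ∈ R.Φ) : R.s (g β) = g * R.s β * g⁻¹ := by
  ext v
  obtain ⟨v, rfl⟩ := g.surjective v
  have hv : g⁻¹ (g v) = v := g.symm_apply_apply v
  simp only [LinearEquiv.mul_apply, hv]
  rw [s_eq_reflection (hR.coroot_self _ (apply_mem_of_mem_stabilizer hg hβ)),
    s_eq_reflection (hR.coroot_self β hβ), reflection_apply, reflection_apply,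
    hR.coroot_apply_apply hg hβ, map_sub, map_smul]

theorem coroot_nonneg_of_dominant {lam : R.V} (hdom : R.Dominant lam) {β : R.V}
    (hβ : β ∈ R.pos) : 0 ≤ R.coroot β lam := by
  obtain ⟨B, hpos, hinv⟩ := hR.exists_invariant_form
  have hBpos {γ : R.V} (hγ : γ ∈ R.Φ) : 0 < B γ γ := hpos γ (hR.ne_zero γ hγ)
  have hsimple (j : Fin R.r) : 0 ≤ B lam (R.α j) := by
    have h := hdom j
    rw [hR.coroot_eq_of_invariant hpos hinv (hR.simple_mem j),
      le_div_iff₀ (hBpos (hR.simple_mem j))] at h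
    linarith
  rw [hR.coroot_eq_of_invariant hpos hinv (hR.pos_subset hβ)]
  refine div_nonneg (mul_nonneg zero_le_two ?_) (hBpos (hR.pos_subset hβ)).le
  obtain ⟨c, hc, rfl⟩ := hR.pos_nonneg_comb β hβ
  simp only [map_sum, map_smul, smul_eq_mul]
  exact Finset.sum_nonneg fun j _ => mul_nonneg (hc j) (hsimple j)

theorem exists_eq_smul_of_S_apply_notMem_pos {γ : R.V} {j : Fin R.r} (hγ : γ ∈ R.pos)
    (hSγ : R.S j γ ∉ R.pos) : ∃ c : ℚ, c ≠ 0 ∧ γ = c • R.α j := by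
  have hγΦ := hR.pos_subset hγ
  have hSγΦ : R.S j γ ∈ R.Φ := by
    rw [hR.S_apply]
    exact hR.reflection_stable _ (hR.simple_mem j) γ hγΦ
  obtain ⟨c, hc, hcγ⟩ := hR.pos_nonneg_comb γ hγ
  obtain ⟨e, he, heγ⟩ := hR.pos_nonneg_comb _ (hR.neg_mem_pos_of_notMem_pos hSγΦ hSγ)
  -- `γ + (-S j γ) = ⟨γ, α_jᵛ⟩ α_j`: off `j`, two nonnegative coefficients add up to zero
  have hsum : ∑ t, (c t + e t) • R.α t
      = ∑ t, (Pi.single j (R.coroot (R.α j) γ) : Fin R.r → ℚ) t • R.α t := by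
    simp only [add_smul, Finset.sum_add_distrib, ← hcγ, ← heγ, Pi.single_apply, ite_smul,
      zero_smul, Finset.sum_ite_eq', Finset.mem_univ, if_true, hR.S_apply]
    abel
  have hcoeff := Fintype.linearIndependent_iffₛ.mp hR.indep _ _ hsum
  have hzero (t : Fin R.r) (ht : t ≠ j) : c t = 0 := by
    have := hcoeff t
    rw [Pi.single_eq_of_ne ht] at this
    linarith [hc t, he t]
  have hγj : γ = c j • R.α j := by
    rw [hcγ, Finset.sum_eq_single j (fun t _ ht => by rw [hzero t ht, zero_smul]) (by simp)]
  refine ⟨c j, fun h => hR.ne_zero γ hγΦ ?_, hγj⟩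
  rw [hγj, h, zero_smul]

theorem exists_sublist_wordProd_eq_s_mul (l : List (Fin R.r)) {β : R.V} (hβ : β ∈ R.pos)
    (hl : (R.wordProd l)⁻¹ β ∉ R.pos) :
    ∃ l' : List (Fin R.r), l'.Sublist l ∧ R.wordProd l' = R.s β * R.wordProd l := by
  induction l generalizing β with
  | nil => exact absurd hβ (by simpa [wordProd] using hl)
  | cons j t ih =>
    by_cases hSβ : R.S j β ∈ R.pos
    · have ht : (R.wordProd t)⁻¹ (R.S j β) ∉ R.pos := by
        rwa [wordProd_cons, mul_inv_rev, hR.S_inv] at hl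
      obtain ⟨t', ht', hprod⟩ := ih hSβ ht
      refine ⟨j :: t', ht'.cons_cons j, ?_⟩
      have hS : R.S j ∈ MulAction.stabilizer R.Aut R.Φ := hR.s_mem_stabilizer (hR.simple_mem j)
      rw [wordProd_cons, wordProd_cons, hprod,
        hR.s_apply_eq_mul_mul_inv hS (hR.pos_subset hβ), hR.S_inv]
      simp only [← mul_assoc, hR.S_mul_self, one_mul]
    · obtain ⟨c, hc, rfl⟩ := hR.exists_eq_smul_of_S_apply_notMem_pos hβ hSβ
      refine ⟨t, List.sublist_cons_self j t, ?_⟩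
      rw [hR.s_smul (hR.simple_mem j) (hR.pos_subset hβ) hc, ← S, wordProd_cons, ← mul_assoc,
        hR.S_mul_self, one_mul]

theorem bruhatLE_S_mul {u w : R.Aut} (huw : R.BruhatLE u w) {i : Fin R.r}
    (hi : u⁻¹ (R.α i) ∉ R.pos) : R.BruhatLE (R.S i * u) w := by
  obtain ⟨l, hl, rfl, l', hl', rfl⟩ := huw
  obtain ⟨l'', hl'', hprod⟩ := hR.exists_sublist_wordProd_eq_s_mul l' (hR.simple_pos i) hi
  exact ⟨l, hl, rfl, l'', hl''.trans hl', hprod⟩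

theorem exists_bruhatLE_apply_eq_add_smul {lam : R.V} (hdom : R.Dominant lam) {u w : R.Aut}
    (hu : u ∈ R.weylGroup) (huw : R.BruhatLE u w) (i : Fin R.r) :
    ∃ v ∈ R.weylGroup, R.BruhatLE v w ∧ v⁻¹ (R.α i) ∈ R.pos ∧
      ∃ k : ℚ, 0 ≤ k ∧ u lam + k • R.α i = v lam := by
  by_cases hi : u⁻¹ (R.α i) ∈ R.pos
  · exact ⟨u, hu, huw, hi, 0, le_rfl, by simp⟩
  set γ := u⁻¹ (R.α i)
  have hγ : γ ∈ R.Φ :=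
    apply_mem_of_mem_stabilizer (hR.weylGroup_le_stabilizer (inv_mem hu)) (hR.simple_mem i)
  have hγ' : -γ ∈ R.pos := hR.neg_mem_pos_of_notMem_pos hγ hi
  refine ⟨R.S i * u, mul_mem (Subgroup.subset_closure ⟨i, rfl⟩) hu, hR.bruhatLE_S_mul huw hi,
    ?_, R.coroot (-γ) lam, hR.coroot_nonneg_of_dominant hdom hγ', ?_⟩
  · rwa [mul_inv_rev, hR.S_inv, LinearEquiv.mul_apply, hR.S_apply_self, map_neg]
  · have hαi : R.α i = u γ := (u.apply_symm_apply _).symm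
    rw [LinearEquiv.mul_apply, hR.S_apply, hR.coroot_neg hγ, hαi,
      hR.coroot_apply_apply (hR.weylGroup_le_stabilizer hu) hγ]
    module

end IsRootSystem

end RootData

theorem statement18_general (R : RootData) (hR : R.IsRootSystem)
    (lam : R.V) (hdom : R.Dominant lam)
    (w : R.Aut) (i : Fin R.r)
    (mu' : R.V) (hmem : mu' ∈ R.demPolytope lam w)
    (hmax : ∀ k : ℚ, mu' + k • R.α i ∈ R.demPolytope lam w → k ≤ 0) :
    ∃ (T : Finset R.Aut) (b : R.Aut → ℚ),
      (∀ u ∈ T, R.BruhatLE u w ∧ u⁻¹ (R.α i) ∈ R.pos ∧ 0 ≤ b u) ∧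
      ∑ u ∈ T, b u = 1 ∧ mu' = ∑ u ∈ T, b u • u lam := by
  let A : Set R.Aut := {u | u ∈ R.weylGroup ∧ R.BruhatLE u w ∧ u⁻¹ (R.α i) ∈ R.pos}
  let vertices : Set R.V := {m | ∃ u : R.Aut, u ∈ R.weylGroup ∧ R.BruhatLE u w ∧ m = u lam}
  have hA : (fun u : R.Aut => u lam) '' A ⊆ vertices := by
    rintro _ ⟨u, ⟨hu, huw, -⟩, rfl⟩
    exact ⟨u, hu, huw, rfl⟩
  have hraise : ∀ y ∈ vertices, ∃ k : ℚ, 0 ≤ k ∧ y + k • R.α i ∈ (fun u : R.Aut => u lam) '' A := by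
    rintro _ ⟨u, hu, huw, rfl⟩
    obtain ⟨v, hv, hvw, hvi, k, hk, hkv⟩ := hR.exists_bruhatLE_apply_eq_add_smul hdom hu huw i
    exact ⟨k, hk, v, ⟨hv, hvw, hvi⟩, hkv.symm⟩
  obtain ⟨T, b, hT, hb, hmu⟩ := exists_finset_of_mem_convexHull_image
    (mem_convexHull_of_maximal_in_direction hA hraise hmem hmax)
  exact ⟨T, b, fun u hu => ⟨(hT u hu).1.2.1, (hT u hu).1.2.2, (hT u hu).2⟩, hb, hmu⟩

theorem statement18 (R : RootData) (hR : R.IsRootSystem)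
    (lam : R.V) (hdom : R.Dominant lam)
    (w : R.Aut) (hw : w ∈ R.weylGroup) (i : Fin R.r)
    (mu' : R.V) (hmem : mu' ∈ R.demPolytope lam w)
    (hmax : ∀ k : ℚ, mu' + k • R.α i ∈ R.demPolytope lam w → k ≤ 0) :
    ∃ (T : Finset R.Aut) (b : R.Aut → ℚ),
      (∀ u ∈ T, R.BruhatLE u w ∧ u⁻¹ (R.α i) ∈ R.pos ∧ 0 ≤ b u) ∧
      ∑ u ∈ T, b u = 1 ∧ mu' = ∑ u ∈ T, b u • u lam :=
  statement18_general R hR lam hdom w i mu' hmem hmax
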